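/- Let y be a string over an alphabet Σ, let T ≥ 1, and let x = x^1 ∘ x^2 ∘ ⋯ ∘ x^T be a concatenation of strings over Σ. For each i ∈ {1,…,T}, let d_i = min over all contiguous substrings w of y (including the empty string) of ED(x^i, w), and let w_i be a contiguous substring of y attaining this minimum. Let ỹ = w_1 ∘ w_2 ∘ ⋯ ∘ w_T. Then ED(x, y) ≤ ED(y, ỹ) + Σ_{i=1}^T d_i ≤ 3 · ED(x, y). -/

import Mathlib

open List

/-! `levenshtein` and its auxiliaries are the definitions of the former Mathlib file
`Mathlib/Data/List/EditDistance/Defs.lean`. -/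

namespace Levenshtein

structure Cost (α β δ : Type*) where
  delete : α → δ
  insert : β → δ
  substitute : α → β → δ

def defaultCost {α : Type*} [DecidableEq α] : Cost α α ℕ where
  delete _ := 1
  insert _ := 1
  substitute a b := if a = b then 0 else 1

def impl {α β δ : Type*} [AddZeroClass δ] [Min δ] (C : Cost α β δ) (xs : List α) (y : β)
    (d : {r : List δ // 0 < r.length}) : {r : List δ // 0 < r.length} :=
  let ⟨ds, w⟩ := d
  xs.zip (ds.zip ds.tail) |>.foldr
    (init := ⟨[ds.getLast (List.ne_nil_of_length_pos w) + C.insert y], by simp⟩)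
    (fun ⟨x, d₀, d₁⟩ ⟨r, w⟩ =>
      ⟨min (C.delete x + r[0]) (min (C.insert y + d₀) (C.substitute x y + d₁)) :: r, by simp⟩)

end Levenshtein

def suffixLevenshtein {α β δ : Type*} [AddZeroClass δ] [Min δ] (C : Levenshtein.Cost α β δ)
    (xs : List α) (ys : List β) : {r : List δ // 0 < r.length} :=
  ys.foldr
    (Levenshtein.impl C xs)
    (xs.foldr (init := ⟨[0], by simp⟩) (fun a ⟨r, w⟩ => ⟨(C.delete a + r[0]) :: r, by simp⟩))

def levenshtein {α β δ : Type*} [AddZeroClass δ] [Min δ] (C : Levenshtein.Cost α β δ)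
    (xs : List α) (ys : List β) : δ :=
  let ⟨r, _⟩ := suffixLevenshtein C xs ys
  r[0]

def ED {α : Type*} [DecidableEq α] (u v : List α) : ℕ :=
  levenshtein Levenshtein.defaultCost u v

/-!
Both inequalities come from the metric properties of `ED` (symmetry, triangle inequality,
subadditivity under concatenation). The first is the triangle inequality through `ỹ`, since
`ED(x, ỹ) ≤ Σ ED(x^i, w_i) = Σ d_i`. For the second, an optimal alignment of `x` with `y` cuts `y`
into consecutive pieces `y = y^1 ∘ ⋯ ∘ y^T` with `Σ ED(x^i, y^i) ≤ ED(x, y)`. Each `y^i` is a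
substring of `y`, so `d_i ≤ ED(x^i, y^i)` and `Σ d_i ≤ ED(x, y)`, while
`ED(y, ỹ) ≤ Σ ED(y^i, w_i) ≤ Σ (ED(y^i, x^i) + d_i) ≤ 2 ED(x, y)`.

`ED u v` is the least cost of an `EditScript u v`; on scripts, symmetry, the triangle
inequality and the splitting along a concatenation are structural inductions.
-/

namespace Levenshtein

variable {α β δ : Type*} [AddZeroClass δ] [Min δ] (C : Cost α β δ)

theorem impl_cons {x : α} {xs : List α} {y : β} {d : δ} {ds : List δ} (w)
    (w' : 0 < ds.length) :
    impl C (x :: xs) y ⟨d :: ds, w⟩ =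
      ⟨min (C.delete x + (impl C xs y ⟨ds, w'⟩).1[0]'(impl C xs y ⟨ds, w'⟩).2)
        (min (C.insert y + d) (C.substitute x y + ds[0])) :: (impl C xs y ⟨ds, w'⟩).1,
        by simp⟩ :=
  match ds, w' with | _ :: _, _ => rfl

theorem impl_length (xs : List α) (y : β) (d : {r : List δ // 0 < r.length})
    (w : d.1.length = xs.length + 1) : (impl C xs y d).1.length = xs.length + 1 := by
  induction xs generalizing d with
  | nil => rfl
  | cons x xs ih =>
    match d, w with
    | ⟨_ :: d₂ :: ds, _⟩, w =>
      rw [impl_cons C _ (by simp), List.length_cons, ih ⟨d₂ :: ds, by simp⟩ (by simpa using w),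
        List.length_cons]

end Levenshtein

section Recursion

variable {α β δ : Type*} [AddZeroClass δ] [Min δ] (C : Levenshtein.Cost α β δ)

theorem suffixLevenshtein_length (xs : List α) (ys : List β) :
    (suffixLevenshtein C xs ys).1.length = xs.length + 1 := by
  induction ys with
  | nil =>
    induction xs with
    | nil => rfl
    | cons x xs ih => exact congrArg (· + 1) ih
  | cons y ys ih => exact Levenshtein.impl_length C xs y _ ih

theorem suffixLevenshtein_cons₁ (x : α) (xs : List α) (ys : List β) :
    suffixLevenshtein C (x :: xs) ys =
      ⟨levenshtein C (x :: xs) ys :: (suffixLevenshtein C xs ys).1, by simp⟩ := by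
  apply Subtype.ext
  induction ys with
  | nil => rfl
  | cons y ys ih =>
    have htail : (suffixLevenshtein C (x :: xs) (y :: ys)).1.tail =
        (suffixLevenshtein C xs (y :: ys)).1 := by
      change (Levenshtein.impl C (x :: xs) y (suffixLevenshtein C (x :: xs) ys)).1.tail = _
      rw [Subtype.ext ih, Levenshtein.impl_cons C _ (suffixLevenshtein C xs ys).2]
      rfl
    change _ = (suffixLevenshtein C (x :: xs) (y :: ys)).1[0]'(suffixLevenshtein C _ _).2 :: _
    rw [← htail, List.getElem_zero, List.cons_head_tail]

theorem levenshtein_cons_nil (x : α) (xs : List α) :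
    levenshtein C (x :: xs) [] = C.delete x + levenshtein C xs [] := rfl

theorem levenshtein_nil_cons (y : β) (ys : List β) :
    levenshtein C [] (y :: ys) = levenshtein C [] ys + C.insert y := by
  change (suffixLevenshtein C [] ys).1.getLast
    (List.ne_nil_of_length_pos (suffixLevenshtein C [] ys).2) + _ = _
  congr 1
  rw [List.getLast_eq_getElem]
  simp only [suffixLevenshtein_length, List.length_nil]
  rfl

theorem levenshtein_cons_cons (x : α) (xs : List α) (y : β) (ys : List β) :
    levenshtein C (x :: xs) (y :: ys) =
      min (C.delete x + levenshtein C xs (y :: ys))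
        (min (C.insert y + levenshtein C (x :: xs) ys)
          (C.substitute x y + levenshtein C xs ys)) := by
  change (Levenshtein.impl C (x :: xs) y (suffixLevenshtein C (x :: xs) ys)).1[0]'
    (Levenshtein.impl C (x :: xs) y (suffixLevenshtein C (x :: xs) ys)).2 = _
  rw [suffixLevenshtein_cons₁, Levenshtein.impl_cons C _ (suffixLevenshtein C xs ys).2]
  rfl

end Recursion

section EditDistance

variable {α : Type*} [DecidableEq α]

def mismatch (a b : α) : ℕ := if a = b then 0 else 1

theorem mismatch_comm (a b : α) : mismatch a b = mismatch b a := by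
  simp only [mismatch, eq_comm]

theorem mismatch_triangle (a b c : α) : mismatch a c ≤ mismatch a b + mismatch b c := by
  unfold mismatch
  split_ifs <;> simp_all

theorem ED_nil_cons (b : α) (v : List α) : ED [] (b :: v) = ED [] v + 1 :=
  levenshtein_nil_cons _ b v

theorem ED_cons_nil (a : α) (u : List α) : ED (a :: u) [] = ED u [] + 1 :=
  (levenshtein_cons_nil _ a u).trans (Nat.add_comm _ _)

theorem ED_cons_cons (a b : α) (u v : List α) :
    ED (a :: u) (b :: v) =
      min (1 + ED u (b :: v)) (min (1 + ED (a :: u) v) (mismatch a b + ED u v)) :=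
  levenshtein_cons_cons _ a u b v

theorem ED_cons_right_le (u : List α) (b : α) (v : List α) : ED u (b :: v) ≤ ED u v + 1 := by
  cases u with
  | nil => rw [ED_nil_cons]
  | cons a u =>
    rw [ED_cons_cons, Nat.add_comm _ 1]
    exact (min_le_right _ _).trans (min_le_left _ _)

theorem ED_cons_left_le (a : α) (u v : List α) : ED (a :: u) v ≤ ED u v + 1 := by
  cases v with
  | nil => rw [ED_cons_nil]
  | cons b v =>
    rw [ED_cons_cons, Nat.add_comm _ 1]
    exact min_le_left _ _

theorem ED_cons_cons_le (a b : α) (u v : List α) :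
    ED (a :: u) (b :: v) ≤ mismatch a b + ED u v := by
  rw [ED_cons_cons]
  exact (min_le_right _ _).trans (min_le_right _ _)

inductive EditScript : List α → List α → ℕ → Prop
  | nil : EditScript [] [] 0
  | insert {u v n} (b : α) : EditScript u v n → EditScript u (b :: v) (n + 1)
  | delete {u v n} (a : α) : EditScript u v n → EditScript (a :: u) v (n + 1)
  | substitute {u v n} (a b : α) :
      EditScript u v n → EditScript (a :: u) (b :: v) (n + mismatch a b)

namespace EditScript

theorem of_eq {u v : List α} {m n : ℕ} (h : EditScript u v m) (e : m = n) : EditScript u v n :=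
  e ▸ h

theorem ED_le {u v : List α} {n : ℕ} (h : EditScript u v n) : ED u v ≤ n := by
  induction h with
  | nil => exact le_rfl
  | insert b _ ih => exact (ED_cons_right_le _ _ _).trans (by omega)
  | delete a _ ih => exact (ED_cons_left_le _ _ _).trans (by omega)
  | substitute a b _ ih => exact (ED_cons_cons_le a b _ _).trans (by omega)

theorem of_ED (u v : List α) : EditScript u v (ED u v) := by
  induction u generalizing v with
  | nil =>
    induction v with
    | nil => exact nil
    | cons b v ih => rw [ED_nil_cons]; exact ih.insert b
  | cons a u ihu =>
    induction v with
    | nil => rw [ED_cons_nil]; exact (ihu []).delete a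
    | cons b v ihv =>
      rw [ED_cons_cons]
      rcases min_choice (1 + ED u (b :: v))
          (min (1 + ED (a :: u) v) (mismatch a b + ED u v)) with h | h <;> rw [h]
      · exact ((ihu _).delete a).of_eq (Nat.add_comm _ _)
      rcases min_choice (1 + ED (a :: u) v) (mismatch a b + ED u v) with h | h <;> rw [h]
      · exact (ihv.insert b).of_eq (Nat.add_comm _ _)
      · exact ((ihu v).substitute a b).of_eq (Nat.add_comm _ _)

theorem symm {u v : List α} {n : ℕ} (h : EditScript u v n) : EditScript v u n := by
  induction h with
  | nil => exact nil
  | insert b _ ih => exact ih.delete b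
  | delete a _ ih => exact ih.insert a
  | substitute a b _ ih => exact (ih.substitute b a).of_eq (by rw [mismatch_comm])

theorem append {u₁ v₁ u₂ v₂ : List α} {m n : ℕ} (h₁ : EditScript u₁ v₁ m)
    (h₂ : EditScript u₂ v₂ n) : EditScript (u₁ ++ u₂) (v₁ ++ v₂) (m + n) := by
  induction h₁ with
  | nil => simpa using h₂
  | insert b _ ih => exact (ih.insert b).of_eq (by omega)
  | delete a _ ih => exact (ih.delete a).of_eq (by omega)
  | substitute a b _ ih => exact (ih.substitute a b).of_eq (by omega)

theorem trans : ∀ {u v w : List α} {m n : ℕ}, EditScript u v m → EditScript v w n →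
    ∃ k ≤ m + n, EditScript u w k
  | _, _, _, _, _, h₁, insert c h₂ =>
    let ⟨k, hk, h⟩ := trans h₁ h₂
    ⟨k + 1, by omega, h.insert c⟩
  | _, _, _, _, _, delete a h₁, h₂ =>
    let ⟨k, hk, h⟩ := trans h₁ h₂
    ⟨k + 1, by omega, h.delete a⟩
  | _, _, _, _, _, nil, h₂ => ⟨_, by omega, h₂⟩
  | _, _, _, _, _, insert _ h₁, delete _ h₂ =>
    let ⟨k, hk, h⟩ := trans h₁ h₂
    ⟨k, by omega, h⟩
  | _, _, _, _, _, insert _ h₁, substitute _ c h₂ =>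
    let ⟨k, hk, h⟩ := trans h₁ h₂
    ⟨k + 1, by omega, h.insert c⟩
  | _, _, _, _, _, substitute a _ h₁, delete _ h₂ =>
    let ⟨k, hk, h⟩ := trans h₁ h₂
    ⟨k + 1, by omega, h.delete a⟩
  | _, _, _, _, _, substitute a b h₁, substitute _ c h₂ =>
    let ⟨k, hk, h⟩ := trans h₁ h₂
    ⟨k + mismatch a c, by have := mismatch_triangle a b c; omega, h.substitute a c⟩
termination_by u v w => u.length + v.length + w.length

theorem split {u v : List α} {n : ℕ} (h : EditScript u v n) (a b : List α) (hu : u = a ++ b) :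
    ∃ c d m₁ m₂, v = c ++ d ∧ EditScript a c m₁ ∧ EditScript b d m₂ ∧ m₁ + m₂ = n := by
  induction h generalizing a with
  | nil =>
    obtain ⟨rfl, rfl⟩ := List.append_eq_nil_iff.mp hu.symm
    exact ⟨[], [], 0, 0, rfl, nil, nil, rfl⟩
  | insert c _ ih =>
    obtain ⟨c', d, m₁, m₂, rfl, h₁, h₂, hm⟩ := ih a hu
    exact ⟨c :: c', d, m₁ + 1, m₂, rfl, h₁.insert c, h₂, by omega⟩
  | @delete u' v' n' x h ih =>
    cases a with
    | nil =>
      subst hu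
      exact ⟨[], v', 0, n' + 1, rfl, nil, h.delete x, by omega⟩
    | cons x' a =>
      obtain ⟨rfl, hu'⟩ := List.cons_eq_cons.mp (hu.trans (List.cons_append ..))
      obtain ⟨c, d, m₁, m₂, rfl, h₁, h₂, hm⟩ := ih a hu'
      exact ⟨c, d, m₁ + 1, m₂, rfl, h₁.delete x, h₂, by omega⟩
  | @substitute u' v' n' x y h ih =>
    cases a with
    | nil =>
      subst hu
      exact ⟨[], y :: v', 0, n' + mismatch x y, rfl, nil, h.substitute x y, by omega⟩
    | cons x' a =>
      obtain ⟨rfl, hu'⟩ := List.cons_eq_cons.mp (hu.trans (List.cons_append ..))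
      obtain ⟨c, d, m₁, m₂, rfl, h₁, h₂, hm⟩ := ih a hu'
      exact ⟨y :: c, d, m₁ + mismatch x y, m₂, rfl, h₁.substitute x y, h₂, by omega⟩

end EditScript

theorem ED_comm (u v : List α) : ED u v = ED v u :=
  le_antisymm (EditScript.of_ED v u).symm.ED_le (EditScript.of_ED u v).symm.ED_le

theorem ED_triangle (u v w : List α) : ED u w ≤ ED u v + ED v w :=
  let ⟨_, hk, h⟩ := (EditScript.of_ED u v).trans (EditScript.of_ED v w)
  h.ED_le.trans hk

theorem ED_append_le (u₁ u₂ v₁ v₂ : List α) : ED (u₁ ++ u₂) (v₁ ++ v₂) ≤ ED u₁ v₁ + ED u₂ v₂ :=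
  ((EditScript.of_ED u₁ v₁).append (EditScript.of_ED u₂ v₂)).ED_le

theorem exists_append_eq_ED_add_ED_le (u₁ u₂ v : List α) :
    ∃ v₁ v₂, v = v₁ ++ v₂ ∧ ED u₁ v₁ + ED u₂ v₂ ≤ ED (u₁ ++ u₂) v :=
  let ⟨v₁, v₂, _, _, hv, h₁, h₂, hm⟩ := (EditScript.of_ED (u₁ ++ u₂) v).split u₁ u₂ rfl
  ⟨v₁, v₂, hv, hm ▸ add_le_add h₁.ED_le h₂.ED_le⟩

theorem ED_flatten_ofFn_le_sum {T : ℕ} (f g : Fin T → List α) :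
    ED (List.ofFn f).flatten (List.ofFn g).flatten ≤ ∑ i, ED (f i) (g i) := by
  induction T with
  | zero => exact (show ED [] [] = 0 from rfl).trans_le (Nat.zero_le _)
  | succ T ih =>
    simp only [List.ofFn_succ, List.flatten_cons, Fin.sum_univ_succ]
    exact (ED_append_le _ _ _ _).trans (Nat.add_le_add_left (ih _ _) _)

theorem exists_flatten_ofFn_eq_sum_ED_le {T : ℕ} (f : Fin (T + 1) → List α) (v : List α) :
    ∃ g : Fin (T + 1) → List α,
      (List.ofFn g).flatten = v ∧ ∑ i, ED (f i) (g i) ≤ ED (List.ofFn f).flatten v := by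
  induction T generalizing v with
  | zero => exact ⟨fun _ => v, by simp, by simp⟩
  | succ T ih =>
    obtain ⟨v₁, v₂, rfl, hv⟩ :=
      exists_append_eq_ED_add_ED_le (f 0) (List.ofFn fun i : Fin (T + 1) => f i.succ).flatten v
    obtain ⟨g, rfl, hg⟩ := ih (fun i => f i.succ) v₂
    refine ⟨Fin.cons v₁ g, by simp [List.ofFn_succ], ?_⟩
    rw [Fin.sum_univ_succ, List.ofFn_succ, List.flatten_cons]
    simpa only [Fin.cons_zero, Fin.cons_succ] using (Nat.add_le_add_left hg _).trans hv

end EditDistance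

/-- Let `x = x^1 ∘ ⋯ ∘ x^T` (with `T ≥ 1`), and for each `i` let
`d_i` be the minimum over all contiguous substrings `w` of `y` of `ED(x^i, w)`, attained
by the contiguous substring `w_i` of `y`.  With `ỹ = w_1 ∘ ⋯ ∘ w_T` we have
`ED(x, y) ≤ ED(y, ỹ) + Σ_i d_i ≤ 3·ED(x, y)`. -/
theorem stmt4 {α : Type*} [DecidableEq α] (T : ℕ) (hT : 1 ≤ T)
    (y : List α) (X : Fin T → List α) (W : Fin T → List α) (d : Fin T → ℕ)
    (hd : ∀ i, d i = sInf {k : ℕ | ∃ w : List α, w <:+: y ∧ k = ED (X i) w})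
    (hW : ∀ i, W i <:+: y ∧ ED (X i) (W i) = d i) :
    ED (List.ofFn X).flatten y ≤ ED y (List.ofFn W).flatten + ∑ i : Fin T, d i ∧
    ED y (List.ofFn W).flatten + ∑ i : Fin T, d i ≤ 3 * ED (List.ofFn X).flatten y := by
  obtain ⟨T, rfl⟩ := Nat.exists_eq_add_of_le' hT
  refine ⟨?_, ?_⟩
  · have hXW : ED (List.ofFn X).flatten (List.ofFn W).flatten ≤ ∑ i, d i :=
      (ED_flatten_ofFn_le_sum X W).trans_eq (Finset.sum_congr rfl fun i _ => (hW i).2)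
    have := ED_triangle (List.ofFn X).flatten (List.ofFn W).flatten y
    rw [ED_comm (List.ofFn W).flatten] at this
    omega
  obtain ⟨Y, rfl, hY⟩ := exists_flatten_ofFn_eq_sum_ED_le X y
  have hdY : ∑ i, d i ≤ ∑ i, ED (X i) (Y i) := Finset.sum_le_sum fun i _ =>
    (hd i).trans_le <| Nat.sInf_le
      ⟨Y i, List.infix_of_mem_flatten (List.mem_ofFn.mpr ⟨i, rfl⟩), rfl⟩
  have hYW : ED (List.ofFn Y).flatten (List.ofFn W).flatten ≤ ∑ i, (ED (X i) (Y i) + d i) :=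
    (ED_flatten_ofFn_le_sum Y W).trans <| Finset.sum_le_sum fun i _ =>
      (ED_triangle (Y i) (X i) (W i)).trans_eq (by rw [ED_comm, (hW i).2])
  rw [Finset.sum_add_distrib] at hYW
  omega
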